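/- For any n ≥ 1 and real exponents β₁, …, β_n > -1, the simplex integral ∫_{0<t₁<…<t_n<t} ∏_{j=1}^n (t_{j+1}-t_j)^{β_j} dt₁…dt_n equals (∏_{j=1}^n Γ(β_j+1)) / Γ(∑_{j=1}^n β_j + n + 1) · t^{∑_{j=1}^n β_j + n}, where t_{n+1} := t. -/

import Mathlib

/-!
Write the last point of `T_{n+1}(t)` as `x`. Integrating out the remaining points first
(Tonelli), the integral over `T_{n+1}(t)` becomes `∫₀ᵗ (t - x)^{β_{n+1}} I_n(x) dx`, where
`I_n(x)` is the same integral over `T_n(x)` with exponents `β_1, …, β_n`. By induction `I_n(x)`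
is a constant times `x^{∑ β_j + n}`, and what remains is a Beta integral. Working with `∫⁻`
until the very end avoids any integrability bookkeeping.
-/

open MeasureTheory Real Set
open scoped ENNReal

/-- `T_n(t)`, with `u j` in the role of `t_{j+1}`. -/
def orderedSimplex (n : ℕ) (t : ℝ) : Set (Fin n → ℝ) :=
  {u | (∀ j, 0 < u j ∧ u j < t) ∧ StrictMono u}

noncomputable def simplexIntegrand {n : ℕ} (t : ℝ) (β : Fin n → ℝ) (u : Fin n → ℝ) :
    ℝ :=
  ∏ j : Fin n, ((if h : (j : ℕ) + 1 < n then u ⟨(j : ℕ) + 1, h⟩ else t) - u j) ^ (β j)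

theorem integral_rpow_mul_sub_rpow {a b t : ℝ} (ha : -1 < a) (hb : -1 < b) (ht : 0 < t) :
    ∫ x in 0..t, x ^ a * (t - x) ^ b
      = Gamma (a + 1) * Gamma (b + 1) / Gamma (a + b + 2) * t ^ (a + b + 1) := by
  have hbeta := Complex.betaIntegral_scaled (a + 1) (b + 1) ht
  rw [Complex.betaIntegral_eq_Gamma_mul_div _ _ (by simpa using by linarith)
    (by simpa using by linarith)] at hbeta
  apply Complex.ofReal_injective
  rw [← intervalIntegral.integral_ofReal]
  convert hbeta using 1
  · refine intervalIntegral.integral_congr fun x hx => ?_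
    rw [uIcc_of_le ht.le] at hx
    push_cast
    rw [Complex.ofReal_cpow hx.1, Complex.ofReal_cpow (sub_nonneg.2 hx.2)]
    push_cast
    ring_nf
  · rw [show (a : ℂ) + 1 + (b + 1) - 1 = ((a + b + 1 : ℝ) : ℂ) by push_cast; ring,
      show (a : ℂ) + 1 + (b + 1) = ((a + b + 2 : ℝ) : ℂ) by push_cast; ring,
      show (a : ℂ) + 1 = ((a + 1 : ℝ) : ℂ) by push_cast; ring,
      show (b : ℂ) + 1 = ((b + 1 : ℝ) : ℂ) by push_cast; ring,
      ← Complex.ofReal_cpow ht.le, Complex.Gamma_ofReal, Complex.Gamma_ofReal,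
      Complex.Gamma_ofReal]
    push_cast
    ring

theorem lintegral_Ioo_rpow_mul_sub_rpow {a b t : ℝ} (ha : -1 < a) (hb : -1 < b) (ht : 0 < t) :
    ∫⁻ x in Ioo 0 t, ENNReal.ofReal (x ^ a * (t - x) ^ b)
      = ENNReal.ofReal (Gamma (a + 1) * Gamma (b + 1) / Gamma (a + b + 2) * t ^ (a + b + 1)) := by
  have hI := integral_rpow_mul_sub_rpow ha hb ht
  rw [intervalIntegral.integral_of_le ht.le, integral_Ioc_eq_integral_Ioo] at hI
  have hpos : 0 < Gamma (a + 1) * Gamma (b + 1) / Gamma (a + b + 2) * t ^ (a + b + 1) := by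
    have := Gamma_pos_of_pos (show 0 < a + 1 by linarith)
    have := Gamma_pos_of_pos (show 0 < b + 1 by linarith)
    have := Gamma_pos_of_pos (show 0 < a + b + 2 by linarith)
    positivity
  -- a function with nonzero integral is integrable
  rw [← hI, ofReal_integral_eq_lintegral_ofReal (.of_integral_ne_zero (hI ▸ hpos.ne'))]
  exact ae_restrict_of_forall_mem measurableSet_Ioo fun x hx =>
    mul_nonneg (rpow_nonneg hx.1.le a) (rpow_nonneg (sub_nonneg.2 hx.2.le) b)

theorem lintegral_fin_snoc {α : Type*} [MeasureSpace α] [SigmaFinite (volume : Measure α)]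
    {n : ℕ} {f : (Fin (n + 1) → α) → ℝ≥0∞} (hf : Measurable f) :
    ∫⁻ u, f u = ∫⁻ x, ∫⁻ y, f (Fin.snoc y x) := by
  set e := MeasurableEquiv.piFinSuccAbove (fun _ : Fin (n + 1) => α) (Fin.last n)
  rw [← ((volume_preserving_piFinSuccAbove _ _).symm e).lintegral_comp hf,
    Measure.volume_eq_prod,
    lintegral_prod (fun p => f (e.symm p)) (hf.comp e.symm.measurable).aemeasurable]
  simp [e, MeasurableEquiv.piFinSuccAbove_symm_apply, Fin.snocEquiv]

theorem Fin.strictMono_snoc_iff {α : Type*} [Preorder α] {n : ℕ} {y : Fin n → α} {x : α} :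
    StrictMono (Fin.snoc y x : Fin (n + 1) → α) ↔ StrictMono y ∧ ∀ i, y i < x := by
  rw [← Fin.insertNth_last', Fin.strictMono_insertNth_iff]
  simp [Fin.castSucc_lt_last, (Fin.castSucc_lt_last _).not_ge]

theorem sum_add_card_nonneg {n : ℕ} {β : Fin n → ℝ} (hβ : ∀ j, -1 < β j) :
    0 ≤ (∑ j, β j) + n := by
  have := Finset.sum_nonneg fun j (_ : j ∈ Finset.univ) => (by linarith [hβ j] : 0 ≤ β j + 1)
  simpa [Finset.sum_add_distrib] using this

theorem prod_Gamma_div_Gamma_sum_nonneg {n : ℕ} {β : Fin n → ℝ} (hβ : ∀ j, -1 < β j) :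
    0 ≤ (∏ j, Gamma (β j + 1)) / Gamma ((∑ j, β j) + n + 1) :=
  div_nonneg (Finset.prod_nonneg fun j _ => (Gamma_pos_of_pos (by linarith [hβ j])).le)
    (Gamma_pos_of_pos (by linarith [sum_add_card_nonneg hβ])).le

theorem measurableSet_orderedSimplex (n : ℕ) (t : ℝ) : MeasurableSet (orderedSimplex n t) := by
  simp only [orderedSimplex, StrictMono, ofPred_and, ofPred_forall]
  measurability

theorem snoc_mem_orderedSimplex_iff {n : ℕ} {t x : ℝ} {y : Fin n → ℝ} :
    Fin.snoc y x ∈ orderedSimplex (n + 1) t ↔ x ∈ Ioo 0 t ∧ y ∈ orderedSimplex n x := by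
  simp only [orderedSimplex, mem_ofPred_eq, Fin.forall_fin_succ', Fin.snoc_castSucc,
    Fin.snoc_last, Fin.strictMono_snoc_iff, mem_Ioo]
  grind

theorem measurable_simplexIntegrand {n : ℕ} (t : ℝ) (β : Fin n → ℝ) :
    Measurable (simplexIntegrand t β) := by
  refine Finset.measurable_prod _ fun j _ => ?_
  split_ifs <;> fun_prop

theorem simplexIntegrand_nonneg {n : ℕ} {t : ℝ} (β : Fin n → ℝ) {u : Fin n → ℝ}
    (hu : u ∈ orderedSimplex n t) : 0 ≤ simplexIntegrand t β u := by
  refine Finset.prod_nonneg fun j _ => rpow_nonneg (sub_nonneg.2 ?_) _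
  split_ifs with h
  · exact (hu.2 (show j < ⟨j + 1, h⟩ from Fin.lt_def.2 j.val.lt_succ_self)).le
  · exact (hu.1 j).2.le

theorem simplexIntegrand_snoc {n : ℕ} (t x : ℝ) (β : Fin (n + 1) → ℝ) (y : Fin n → ℝ) :
    simplexIntegrand t β (Fin.snoc y x)
      = simplexIntegrand x (Fin.init β) y * (t - x) ^ β (Fin.last n) := by
  unfold simplexIntegrand
  rw [Fin.prod_univ_castSucc]
  simp [Fin.snoc, Fin.init]

theorem lintegral_orderedSimplex_succ {n : ℕ} (t : ℝ) (β : Fin (n + 1) → ℝ) :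
    ∫⁻ u in orderedSimplex (n + 1) t, ENNReal.ofReal (simplexIntegrand t β u)
      = ∫⁻ x in Ioo 0 t, ENNReal.ofReal ((t - x) ^ β (Fin.last n))
          * ∫⁻ y in orderedSimplex n x,
              ENNReal.ofReal (simplexIntegrand x (Fin.init β) y) := by
  rw [← lintegral_indicator (measurableSet_orderedSimplex _ _),
    lintegral_fin_snoc ((measurable_simplexIntegrand t β).ennreal_ofReal.indicator
      (measurableSet_orderedSimplex _ _)),
    ← lintegral_indicator measurableSet_Ioo]
  refine lintegral_congr fun x => ?_
  by_cases hx : x ∈ Ioo 0 t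
  · rw [indicator_of_mem hx, ← lintegral_const_mul' _ _ ENNReal.ofReal_ne_top,
      ← lintegral_indicator (measurableSet_orderedSimplex _ _)]
    refine lintegral_congr fun y => ?_
    by_cases hy : y ∈ orderedSimplex n x
    · rw [indicator_of_mem (snoc_mem_orderedSimplex_iff.2 ⟨hx, hy⟩), indicator_of_mem hy,
        simplexIntegrand_snoc, ENNReal.ofReal_mul' (rpow_nonneg (sub_nonneg.2 hx.2.le) _),
        mul_comm]
    · rw [indicator_of_notMem (fun h => hy (snoc_mem_orderedSimplex_iff.1 h).2),
        indicator_of_notMem hy]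
  · rw [indicator_of_notMem hx]
    refine (lintegral_congr fun y => ?_).trans lintegral_zero
    exact indicator_of_notMem (fun h => hx (snoc_mem_orderedSimplex_iff.1 h).1) _

theorem lintegral_orderedSimplex {n : ℕ} {t : ℝ} (ht : 0 < t) {β : Fin n → ℝ}
    (hβ : ∀ j, -1 < β j) :
    ∫⁻ u in orderedSimplex n t, ENNReal.ofReal (simplexIntegrand t β u)
      = ENNReal.ofReal ((∏ j, Gamma (β j + 1)) / Gamma ((∑ j, β j) + n + 1)
          * t ^ ((∑ j, β j) + n)) := by
  induction n generalizing t with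
  | zero =>
    have : orderedSimplex 0 t = univ :=
      eq_univ_of_forall fun u => ⟨isEmptyElim, Subsingleton.strictMono u⟩
    simp [this, simplexIntegrand, volume_pi]
  | succ n ih =>
    have hinit : ∀ j, -1 < Fin.init β j := fun j => hβ _
    set s := ∑ j, Fin.init β j
    set b := β (Fin.last n)
    set C := (∏ j, Gamma (Fin.init β j + 1)) / Gamma (s + n + 1)
    have hs : 0 ≤ s + n := sum_add_card_nonneg hinit
    have hC : 0 ≤ C := prod_Gamma_div_Gamma_sum_nonneg hinit
    have hfactor : ∀ x ∈ Ioo 0 t,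
        ENNReal.ofReal ((t - x) ^ b) * ENNReal.ofReal (C * x ^ (s + n))
          = ENNReal.ofReal C * ENNReal.ofReal (x ^ (s + n) * (t - x) ^ b) := fun x hx => by
      rw [← ENNReal.ofReal_mul hC, ← ENNReal.ofReal_mul (rpow_nonneg (sub_nonneg.2 hx.2.le) _)]
      ring_nf
    rw [lintegral_orderedSimplex_succ,
      setLIntegral_congr_fun measurableSet_Ioo fun x hx => by rw [ih hx.1 hinit],
      setLIntegral_congr_fun measurableSet_Ioo hfactor,
      lintegral_const_mul' _ _ ENNReal.ofReal_ne_top,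
      lintegral_Ioo_rpow_mul_sub_rpow (by linarith) (hβ _) ht, ← ENNReal.ofReal_mul hC]
    congr 1
    have hG : Gamma (s + n + 1) ≠ 0 := (Gamma_pos_of_pos (by linarith)).ne'
    rw [Fin.prod_univ_castSucc, Fin.sum_univ_castSucc]
    simp only [C, s, Fin.init] at hG ⊢
    push_cast
    field_simp
    ring_nf

theorem simplex_beta_integral_general (n : ℕ) (t : ℝ) (ht : 0 < t)
    (β : Fin n → ℝ) (hβ : ∀ j, -1 < β j) :
    ∫ u in {u : Fin n → ℝ | (∀ j, 0 < u j ∧ u j < t) ∧ StrictMono u},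
        ∏ j : Fin n,
          ((if h : (j : ℕ) + 1 < n then u ⟨(j : ℕ) + 1, h⟩ else t) - u j) ^ (β j)
      = (∏ j : Fin n, Real.Gamma (β j + 1)) / Real.Gamma ((∑ j : Fin n, β j) + n + 1)
          * t ^ ((∑ j : Fin n, β j) + n) := by
  change ∫ u in orderedSimplex n t, simplexIntegrand t β u = _
  have hnonneg : ∀ᵐ u ∂volume.restrict (orderedSimplex n t), 0 ≤ simplexIntegrand t β u :=
    ae_restrict_of_forall_mem (measurableSet_orderedSimplex n t) fun _ hu =>
      simplexIntegrand_nonneg β hu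
  rw [integral_eq_lintegral_of_nonneg_ae hnonneg
      (measurable_simplexIntegrand t β).aestronglyMeasurable,
    lintegral_orderedSimplex ht hβ,
    ENNReal.toReal_ofReal (mul_nonneg (prod_Gamma_div_Gamma_sum_nonneg hβ) (rpow_nonneg ht.le _))]

theorem simplex_beta_integral (n : ℕ) (hn : 1 ≤ n) (t : ℝ) (ht : 0 < t)
    (β : Fin n → ℝ) (hβ : ∀ j, -1 < β j) :
    ∫ u in {u : Fin n → ℝ | (∀ j, 0 < u j ∧ u j < t) ∧ StrictMono u},
        ∏ j : Fin n,
          ((if h : (j : ℕ) + 1 < n then u ⟨(j : ℕ) + 1, h⟩ else t) - u j) ^ (β j)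
      = (∏ j : Fin n, Real.Gamma (β j + 1)) / Real.Gamma ((∑ j : Fin n, β j) + n + 1)
          * t ^ ((∑ j : Fin n, β j) + n) :=
  simplex_beta_integral_general n t ht β hβ
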